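/- Let n ≥ 1, d ≥ 1, let C_0, …, C_{n−1} ≥ 0 be real constants, and set M_d(ε) = Σ_{i=0}^{n−1} C_i·(1/ε)^i. Let Z ⊆ [0,1]^n be a set whose Hausdorff dimension satisfies dim_H Z > n − 1. Then sup_{ε ∈ (0,1]} ε^n·(M(ε,Z) − M_d(ε)) > 0. -/

import Mathlib

open Polynomial MeasureTheory Set ENNReal
open MeasureTheory.Measure Filter Topology

noncomputable def covN (n : ℕ) (ε : ℝ) (A : Set (EuclideanSpace ℝ (Fin n))) : ℕ :=
  sInf {N : ℕ | ∃ c : Fin N → EuclideanSpace ℝ (Fin n),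
    A ⊆ ⋃ i, {x : EuclideanSpace ℝ (Fin n) | ∀ j, |x j - c i j| ≤ ε / 2}}

lemma cover_exists (n : ℕ) {ε : ℝ} (hε : 0 < ε)
    (Z : Set (EuclideanSpace ℝ (Fin n)))
    (hZ : Z ⊆ {x : EuclideanSpace ℝ (Fin n) | ∀ i, x i ∈ Icc (0 : ℝ) 1}) :
    ∃ c : Fin (⌈1/ε⌉₊ ^ n) → EuclideanSpace ℝ (Fin n),
      Z ⊆ ⋃ i, {x : EuclideanSpace ℝ (Fin n) | ∀ j, |x j - c i j| ≤ ε / 2} := by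
  set m := ⌈1/ε⌉₊ with hm
  have hm1 : 1 ≤ m := Nat.one_le_iff_ne_zero.mpr (by
    simp [hm, Nat.ceil_eq_zero, not_le]
    positivity)
  refine ⟨fun i => WithLp.toLp 2 (fun j => ((finFunctionFinEquiv.symm i j : ℕ) + 1/2) * ε), fun x hx => ?_⟩
  have hx' := hZ hx
  set k : Fin n → Fin m := fun j => ⟨min ⌊x j / ε⌋₊ (m - 1), by omega⟩ with hk
  refine mem_iUnion.mpr ⟨finFunctionFinEquiv k, fun j => ?_⟩
  simp only [WithLp.ofLp_toLp, Equiv.symm_apply_apply]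
  have h0 : (0:ℝ) ≤ x j := (hx' j).1
  have h1 : x j ≤ 1 := (hx' j).2
  have hfl : (⌊x j / ε⌋₊ : ℝ) ≤ x j / ε := Nat.floor_le (by positivity)
  have hlow : ((k j : ℕ) : ℝ) * ε ≤ x j := by
    have : ((k j : ℕ) : ℝ) ≤ ⌊x j / ε⌋₊ := by
      simp [hk]
    calc ((k j : ℕ) : ℝ) * ε ≤ (⌊x j / ε⌋₊ : ℝ) * ε := by nlinarith
      _ ≤ x j := by
        rw [← le_div_iff₀ hε]
        exact hfl
  have hhigh : x j ≤ (((k j : ℕ) : ℝ) + 1) * ε := by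
    rcases le_or_gt ⌊x j / ε⌋₊ (m - 1) with h | h
    · have hkj : (k j : ℕ) = ⌊x j / ε⌋₊ := by simp [hk, h]
      have := Nat.lt_floor_add_one (x j / ε)
      rw [hkj]
      nlinarith [(div_lt_iff₀ hε).mp this]
    · have hkj : (k j : ℕ) = m - 1 := by simp [hk]; omega
      have hceil : (1:ℝ)/ε ≤ m := Nat.le_ceil _
      have : ((k j : ℕ) : ℝ) + 1 = m := by
        rw [hkj]; push_cast [Nat.cast_sub hm1]; ring
      rw [this]
      calc x j ≤ 1 := h1
        _ ≤ m * ε := by rw [← div_le_iff₀ hε]; simpa using hceil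
  rw [abs_sub_le_iff]
  constructor <;> nlinarith

lemma cube_diam (n : ℕ) {ε : ℝ} (hε : 0 ≤ ε) (c : EuclideanSpace ℝ (Fin n)) :
    EMetric.diam {x : EuclideanSpace ℝ (Fin n) | ∀ j, |x j - c j| ≤ ε / 2}
      ≤ ENNReal.ofReal (Real.sqrt n * ε) := by
  apply EMetric.diam_le
  intro x hx y hy
  rw [edist_dist, ENNReal.ofReal_le_ofReal_iff (by positivity), EuclideanSpace.dist_eq]
  have hsum : ∑ i, dist (x i) (y i) ^ 2 ≤ (n : ℝ) * ε ^ 2 := by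
    calc ∑ i, dist (x i) (y i) ^ 2 ≤ ∑ _i : Fin n, ε ^ 2 := by
          apply Finset.sum_le_sum
          intro i _
          have h1 := hx i
          have h2 := hy i
          rw [Real.dist_eq]
          have habs : |x i - y i| ≤ ε := by
            calc |x i - y i| ≤ |x i - c i| + |c i - y i| := abs_sub_le _ _ _
              _ = |x i - c i| + |y i - c i| := by rw [abs_sub_comm (c i)]
              _ ≤ ε / 2 + ε / 2 := add_le_add h1 h2
              _ = ε := by ring
          nlinarith [abs_nonneg (x i - y i), sq_abs (x i - y i)]
      _ = (n : ℝ) * ε ^ 2 := by simp [Finset.sum_const]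
  calc Real.sqrt (∑ i, dist (x i) (y i) ^ 2) ≤ Real.sqrt ((n:ℝ) * ε ^ 2) :=
        Real.sqrt_le_sqrt hsum
    _ = Real.sqrt n * ε := by
        rw [Real.sqrt_mul (by positivity), Real.sqrt_sq hε]

/-- If `Z ⊆ [0,1]^n` has Hausdorff dimension (with respect to the Euclidean metric) greater
than `n − 1`, then its metric `d`-span `sup_{ε ∈ (0,1]} ε^n (M(ε,Z) − M_d(ε))` is positive,
where `M_d(ε) = Σ_{i<n} C_i (1/ε)^i`. -/
theorem span_pos_of_dimH (n : ℕ) (hn : 1 ≤ n) (d : ℕ) (hd : 1 ≤ d)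
    (C : Fin n → ℝ) (hC : ∀ i, 0 ≤ C i)
    (Z : Set (EuclideanSpace ℝ (Fin n)))
    (hZ : Z ⊆ {x : EuclideanSpace ℝ (Fin n) | ∀ i, x i ∈ Icc (0 : ℝ) 1})
    (hdim : (n : ℝ≥0∞) - 1 < dimH Z) :
    0 < sSup {y : ℝ | ∃ ε ∈ Set.Ioc (0 : ℝ) 1,
      y = ε ^ n * ((covN n ε Z : ℝ) - ∑ i : Fin n, C i * (1 / ε) ^ (i : ℕ))} := by
  set S := {y : ℝ | ∃ ε ∈ Set.Ioc (0 : ℝ) 1,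
      y = ε ^ n * ((covN n ε Z : ℝ) - ∑ i : Fin n, C i * (1 / ε) ^ (i : ℕ))} with hSdef
  -- covN is realized by an actual covering, and bounded above
  have hcov : ∀ ε : ℝ, 0 < ε → ∃ c : Fin (covN n ε Z) → EuclideanSpace ℝ (Fin n),
      Z ⊆ ⋃ i, {x : EuclideanSpace ℝ (Fin n) | ∀ j, |x j - c i j| ≤ ε / 2} := by
    intro ε hε
    have hne : {N : ℕ | ∃ c : Fin N → EuclideanSpace ℝ (Fin n),
        Z ⊆ ⋃ i, {x : EuclideanSpace ℝ (Fin n) | ∀ j, |x j - c i j| ≤ ε / 2}}.Nonempty :=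
      ⟨⌈1/ε⌉₊ ^ n, cover_exists n hε Z hZ⟩
    exact Nat.sInf_mem hne
  have hbound : ∀ ε : ℝ, 0 < ε → covN n ε Z ≤ ⌈1/ε⌉₊ ^ n := by
    intro ε hε
    exact Nat.sInf_le (cover_exists n hε Z hZ)
  -- S is bounded above by 2^n
  have hbdd : BddAbove S := by
    refine ⟨2 ^ n, fun y hy => ?_⟩
    obtain ⟨ε, hε, rfl⟩ := hy
    have hεp := hε.1
    have hMd : (0:ℝ) ≤ ∑ i : Fin n, C i * (1 / ε) ^ (i : ℕ) := by
      apply Finset.sum_nonneg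
      intro i _
      have : (0:ℝ) ≤ (1/ε) ^ (i:ℕ) := by positivity
      exact mul_nonneg (hC i) this
    have h1 : ε ^ n * ((covN n ε Z : ℝ) - ∑ i : Fin n, C i * (1 / ε) ^ (i : ℕ))
        ≤ ε ^ n * (covN n ε Z : ℝ) := by
      have hp : (0:ℝ) ≤ ε ^ n := by positivity
      nlinarith
    have h2 : ε ^ n * (covN n ε Z : ℝ) ≤ (ε * ⌈1/ε⌉₊) ^ n := by
      rw [mul_pow]
      have : (covN n ε Z : ℝ) ≤ ((⌈1/ε⌉₊:ℕ) ^ n : ℕ) := by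
        exact_mod_cast hbound ε hεp
      have hp : (0:ℝ) ≤ ε ^ n := by positivity
      push_cast at this ⊢
      nlinarith
    have h3 : ε * ⌈1/ε⌉₊ ≤ 2 := by
      have hc : (⌈1/ε⌉₊ : ℝ) < 1/ε + 1 := Nat.ceil_lt_add_one (by positivity)
      have : ε * (⌈1/ε⌉₊ : ℝ) < ε * (1/ε + 1) := by
        exact mul_lt_mul_of_pos_left hc hεp
      rw [mul_add, mul_one_div, div_self (ne_of_gt hεp)] at this
      nlinarith [hε.2]
    calc ε ^ n * ((covN n ε Z : ℝ) - ∑ i : Fin n, C i * (1 / ε) ^ (i : ℕ))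
        ≤ (ε * ⌈1/ε⌉₊) ^ n := le_trans h1 h2
      _ ≤ 2 ^ n := by
          apply pow_le_pow_left₀ (by positivity) h3
  by_contra hcon
  push_neg at hcon
  -- under the contradiction hypothesis, covN is bounded by K (1/ε)^(n-1)
  set K : ℝ := ∑ i : Fin n, C i with hK
  have hKnn : 0 ≤ K := Finset.sum_nonneg fun i _ => hC i
  have key : ∀ ε : ℝ, ε ∈ Set.Ioc (0:ℝ) 1 →
      (covN n ε Z : ℝ) ≤ K * (1/ε) ^ (n-1) := by
    intro ε hε
    have hmem : ε ^ n * ((covN n ε Z : ℝ) - ∑ i : Fin n, C i * (1 / ε) ^ (i : ℕ)) ∈ S :=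
      ⟨ε, hε, rfl⟩
    have hle : ε ^ n * ((covN n ε Z : ℝ) - ∑ i : Fin n, C i * (1 / ε) ^ (i : ℕ)) ≤ 0 :=
      le_trans (le_csSup hbdd hmem) hcon
    have hεp := hε.1
    have hsub : (covN n ε Z : ℝ) ≤ ∑ i : Fin n, C i * (1 / ε) ^ (i : ℕ) := by
      by_contra h
      push_neg at h
      nlinarith [pow_pos hεp n]
    have h1ε : (1:ℝ) ≤ 1/ε := by
      rw [le_div_iff₀ hεp, one_mul]; exact hε.2
    calc (covN n ε Z : ℝ) ≤ ∑ i : Fin n, C i * (1 / ε) ^ (i : ℕ) := hsub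
      _ ≤ ∑ i : Fin n, C i * (1 / ε) ^ (n-1) := by
          apply Finset.sum_le_sum
          intro i _
          apply mul_le_mul_of_nonneg_left _ (hC i)
          apply pow_le_pow_right₀ h1ε
          omega
      _ = K * (1/ε) ^ (n-1) := by rw [hK, Finset.sum_mul]
  -- pick s with n-1 < s < dimH Z
  obtain ⟨s, hs1, hs2⟩ := ENNReal.lt_iff_exists_nnreal_btwn.mp hdim
  have hμ : μH[(s:ℝ)] Z = ∞ := hausdorffMeasure_of_lt_dimH hs2
  have hsreal : (n:ℝ) - 1 < (s:ℝ) := by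
    have h1 : ((n - 1 : ℕ) : ℝ≥0∞) < (s : ℝ≥0∞) := by
      rw [ENNReal.natCast_sub, Nat.cast_one]; exact hs1
    have h2 : ((n - 1 : ℕ) : ℝ) < (s:ℝ) := by exact_mod_cast h1
    rw [Nat.cast_sub hn, Nat.cast_one] at h2
    exact h2
  have hsnn : (0:ℝ) ≤ (s:ℝ) := s.coe_nonneg
  -- the sequence of scales
  set εs : ℕ → ℝ := fun k => 1 / (k + 1) with hεs
  have hεp : ∀ k, 0 < εs k := fun k => by positivity
  have hεle : ∀ k, εs k ≤ 1 := fun k => by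
    rw [hεs]
    rw [div_le_one (by positivity)]
    simp
  choose c hc using fun k => hcov (εs k) (hεp k)
  set t : ∀ k : ℕ, Fin (covN n (εs k) Z) → Set (EuclideanSpace ℝ (Fin n)) :=
    fun k i => {x | ∀ j, |x j - c k i j| ≤ εs k / 2} with ht
  have hdiam : ∀ k i, EMetric.diam (t k i) ≤ ENNReal.ofReal (Real.sqrt n * εs k) :=
    fun k i => cube_diam n (le_of_lt (hεp k)) (c k i)
  have hr0 : Tendsto (fun k => ENNReal.ofReal (Real.sqrt n * εs k)) atTop (𝓝 0) := by
    rw [← ENNReal.ofReal_zero]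
    apply ENNReal.tendsto_ofReal
    have : Tendsto εs atTop (𝓝 0) := by
      rw [hεs]
      exact tendsto_one_div_add_atTop_nhds_zero_nat
    have h := this.const_mul (Real.sqrt n)
    rw [mul_zero] at h
    exact h
  have hμle := hausdorffMeasure_le_liminf_sum (s:ℝ) Z
    (fun k => ENNReal.ofReal (Real.sqrt n * εs k)) hr0 t
    (Eventually.of_forall fun k => hdiam k) (Eventually.of_forall fun k => hc k)
  -- bound the sums
  set texp : ℝ := (s:ℝ) - ((n:ℝ) - 1) with htexp
  have htpos : 0 < texp := by rw [htexp]; linarith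
  have hsumle : ∀ k, (∑ i, EMetric.diam (t k i) ^ (s:ℝ))
      ≤ ENNReal.ofReal (K * Real.sqrt n ^ (s:ℝ) * εs k ^ texp) := by
    intro k
    have h1 : (∑ i, EMetric.diam (t k i) ^ (s:ℝ))
        ≤ ∑ _i : Fin (covN n (εs k) Z), ENNReal.ofReal (Real.sqrt n * εs k) ^ (s:ℝ) :=
      Finset.sum_le_sum fun i _ => ENNReal.rpow_le_rpow (hdiam k i) hsnn
    have h2 : (∑ _i : Fin (covN n (εs k) Z), ENNReal.ofReal (Real.sqrt n * εs k) ^ (s:ℝ))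
        = (covN n (εs k) Z : ℝ≥0∞) * ENNReal.ofReal ((Real.sqrt n * εs k) ^ (s:ℝ)) := by
      rw [Finset.sum_const, ENNReal.ofReal_rpow_of_nonneg (by positivity) hsnn]
      simp [nsmul_eq_mul]
    have h3 : (covN n (εs k) Z : ℝ≥0∞) ≤ ENNReal.ofReal (K * (1/εs k) ^ (n-1)) := by
      rw [show ((covN n (εs k) Z : ℝ≥0∞)) = ENNReal.ofReal ((covN n (εs k) Z : ℝ)) by
        simp [ENNReal.ofReal_natCast]]
      exact ENNReal.ofReal_le_ofReal (key (εs k) ⟨hεp k, hεle k⟩)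
    calc (∑ i, EMetric.diam (t k i) ^ (s:ℝ))
        ≤ (covN n (εs k) Z : ℝ≥0∞) * ENNReal.ofReal ((Real.sqrt n * εs k) ^ (s:ℝ)) := by
          rw [← h2]; exact h1
      _ ≤ ENNReal.ofReal (K * (1/εs k) ^ (n-1)) * ENNReal.ofReal ((Real.sqrt n * εs k) ^ (s:ℝ)) :=
          mul_le_mul_left h3 _
      _ = ENNReal.ofReal (K * (1/εs k) ^ (n-1) * (Real.sqrt n * εs k) ^ (s:ℝ)) := by
          rw [← ENNReal.ofReal_mul (by positivity)]
      _ = ENNReal.ofReal (K * Real.sqrt n ^ (s:ℝ) * εs k ^ texp) := by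
          congr 1
          have hε := hεp k
          rw [Real.mul_rpow (by positivity) (le_of_lt hε)]
          have e1 : (1/εs k) ^ (n-1) = εs k ^ (-(((n:ℝ)) - 1)) := by
            rw [one_div, inv_pow, ← Real.rpow_natCast (εs k) (n-1), ← Real.rpow_neg (le_of_lt hε)]
            congr 1
            rw [Nat.cast_sub hn, Nat.cast_one]
          rw [e1, htexp]
          rw [show (s:ℝ) - ((n:ℝ) - 1) = (-(((n:ℝ)) - 1)) + (s:ℝ) by ring,
            Real.rpow_add hε]
          ring
  have hgl : Tendsto (fun k => ENNReal.ofReal (K * Real.sqrt n ^ (s:ℝ) * εs k ^ texp))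
      atTop (𝓝 0) := by
    rw [← ENNReal.ofReal_zero]
    apply ENNReal.tendsto_ofReal
    have h1 : Tendsto (fun k : ℕ => εs k ^ texp) atTop (𝓝 0) := by
      have h2 : Tendsto (fun k : ℕ => ((k:ℝ) + 1)) atTop atTop :=
        tendsto_atTop_add_const_right atTop 1 tendsto_natCast_atTop_atTop
      have h3 := (tendsto_rpow_neg_atTop htpos).comp h2
      have h4 : (fun k : ℕ => εs k ^ texp)
          = (fun x : ℝ => x ^ (-texp)) ∘ (fun k : ℕ => ((k:ℝ) + 1)) := by
        funext k
        simp only [Function.comp_apply, hεs]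
        rw [Real.rpow_neg (by positivity), ← Real.inv_rpow (by positivity), one_div]
      rw [h4]
      exact h3
    have h := h1.const_mul (K * Real.sqrt n ^ (s:ℝ))
    rw [mul_zero] at h
    exact h
  have hliminf : Filter.liminf (fun k => ∑ i, EMetric.diam (t k i) ^ (s:ℝ)) atTop = 0 := by
    apply le_antisymm _ zero_le
    calc Filter.liminf (fun k => ∑ i, EMetric.diam (t k i) ^ (s:ℝ)) atTop
        ≤ Filter.liminf (fun k => ENNReal.ofReal (K * Real.sqrt n ^ (s:ℝ) * εs k ^ texp)) atTop :=
          Filter.liminf_le_liminf (Eventually.of_forall hsumle)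
      _ = 0 := hgl.liminf_eq
  replace hμle := hμle.trans_eq hliminf
  rw [hμ] at hμle
  simp at hμle
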